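/- Let a, v, R : ℝ³ → ℝ³ be C¹ vector fields and ν : ℝ³ → ℝ a function such that ⟨v(x), a(x)⟩ = 0 and rot v(x) = ν(x) v(x) + R(x) × a(x) for all x ∈ ℝ³. Then every solution x : I → ℝ³ of ẋ = v(x) satisfies ẍ(t) = ∇(½‖v‖²)(x(t)) + ⟨R(x(t)), v(x(t))⟩ · a(x(t)) for all t ∈ I. -/

import Mathlib

/-! The convective derivative of a field satisfies `Dv(v) = ∇(½‖v‖²) − v × rot v`, and along an
integral curve of `v` this is exactly `ẍ`. Substituting `rot v = ν v + R × a`, the term `v × ν v`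
vanishes and the triple product expansion gives `v × (R × a) = ⟨v, a⟩ R − ⟨v, R⟩ a = −⟨R, v⟩ a`. -/

open Real Set Matrix

noncomputable section

/-- Partial derivative in the `k`-th coordinate direction. -/
def pd (k : Fin 3) (f : (Fin 3 → ℝ) → ℝ) (x : Fin 3 → ℝ) : ℝ :=
  fderiv ℝ f x (Pi.single k 1)

/-- Gradient. -/
def grad (f : (Fin 3 → ℝ) → ℝ) (x : Fin 3 → ℝ) : Fin 3 → ℝ := fun k => pd k f x

/-- Euclidean inner product on ℝ³. -/
def dot (a b : Fin 3 → ℝ) : ℝ := ∑ i, a i * b i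

/-- Squared Euclidean norm on ℝ³. -/
def nsq (a : Fin 3 → ℝ) : ℝ := ∑ i, a i ^ 2

/-- Cross product on ℝ³. -/
def cross (a b : Fin 3 → ℝ) : Fin 3 → ℝ :=
  ![a 1 * b 2 - a 2 * b 1, a 2 * b 0 - a 0 * b 2, a 0 * b 1 - a 1 * b 0]

/-- Curl of a vector field on ℝ³. -/
def rot (u : (Fin 3 → ℝ) → (Fin 3 → ℝ)) (x : Fin 3 → ℝ) : Fin 3 → ℝ :=
  ![pd 1 (fun y => u y 2) x - pd 2 (fun y => u y 1) x,
    pd 2 (fun y => u y 0) x - pd 0 (fun y => u y 2) x,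
    pd 0 (fun y => u y 1) x - pd 1 (fun y => u y 0) x]

theorem cross_eq_crossProduct (a b : Fin 3 → ℝ) : cross a b = a ⨯₃ b :=
  (cross_apply a b).symm

theorem dot_eq_dotProduct (a b : Fin 3 → ℝ) : dot a b = a ⬝ᵥ b := rfl

section ConvectiveDerivative

variable {u : (Fin 3 → ℝ) → (Fin 3 → ℝ)} {x : Fin 3 → ℝ}

theorem hasFDerivAt_component (hu : DifferentiableAt ℝ u x) (k : Fin 3) :
    HasFDerivAt (fun y => u y k) ((ContinuousLinearMap.proj k).comp (fderiv ℝ u x)) x :=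
  (ContinuousLinearMap.proj (R := ℝ) (φ := fun _ : Fin 3 => ℝ) k).hasFDerivAt.comp x
    hu.hasFDerivAt

theorem pd_apply_eq_fderiv (hu : DifferentiableAt ℝ u x) (i k : Fin 3) :
    pd i (fun y => u y k) x = fderiv ℝ u x (Pi.single i 1) k := by
  rw [pd, (hasFDerivAt_component hu k).fderiv]
  rfl

theorem grad_half_nsq_apply (hu : DifferentiableAt ℝ u x) (k : Fin 3) :
    grad (fun y => 1 / 2 * nsq (u y)) x k = u x ⬝ᵥ fderiv ℝ u x (Pi.single k 1) := by
  have hnsq : (fun y => 1 / 2 * nsq (u y)) = fun y => 1 / 2 * ∑ i, u y i * u y i := by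
    simp only [nsq, sq]
  have hderiv := (HasFDerivAt.fun_sum (u := Finset.univ) fun i _ =>
    (hasFDerivAt_component hu i).fun_mul (hasFDerivAt_component hu i)).const_mul (1 / 2 : ℝ)
  rw [grad, pd, hnsq, hderiv.fderiv, dotProduct]
  simp only [_root_.smul_apply, _root_.sum_apply, _root_.add_apply,
    ContinuousLinearMap.comp_apply, ContinuousLinearMap.proj_apply, smul_eq_mul, Finset.mul_sum]
  exact Finset.sum_congr rfl fun i _ => by ring

theorem fderiv_apply_self_eq_grad_sub_cross_rot (hu : DifferentiableAt ℝ u x) :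
    fderiv ℝ u x (u x) = grad (fun y => 1 / 2 * nsq (u y)) x - u x ⨯₃ rot u x := by
  conv_lhs => rw [pi_eq_sum_univ' (u x), map_sum]
  funext k
  simp only [Pi.sub_apply, grad_half_nsq_apply hu, map_smul, Finset.sum_apply,
    Pi.smul_apply, smul_eq_mul, Fin.sum_univ_three, dotProduct, rot, cross_apply,
    pd_apply_eq_fderiv hu]
  fin_cases k <;>
  · simp only [Fin.zero_eta, Fin.mk_one, Fin.reduceFinMk, Fin.isValue, cons_val]
    ring

end ConvectiveDerivative

theorem kummer_second_order_general
    (a v R : (Fin 3 → ℝ) → (Fin 3 → ℝ)) (ν : (Fin 3 → ℝ) → ℝ)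
    (hv : ContDiff ℝ 1 v)
    (horth : ∀ x, dot (v x) (a x) = 0)
    (hrot : ∀ x, rot v x = fun k => ν x * v x k + cross (R x) (a x) k)
    (t₁ t₂ : ℝ) (x : ℝ → (Fin 3 → ℝ))
    (hx : ∀ t ∈ Ioo t₁ t₂, HasDerivAt x (v (x t)) t) :
    ∀ t ∈ Ioo t₁ t₂,
      HasDerivAt (fun s => v (x s))
        (fun k => grad (fun y => (1 / 2) * nsq (v y)) (x t) k
          + dot (R (x t)) (v (x t)) * a (x t) k) t := by
  intro t ht
  have hvx : DifferentiableAt ℝ v (x t) := hv.differentiable one_ne_zero (x t)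
  have hrot' : rot v (x t) = ν (x t) • v (x t) + R (x t) ⨯₃ a (x t) := by
    rw [hrot, ← cross_eq_crossProduct]
    rfl
  refine (hvx.hasFDerivAt.comp_hasDerivAt t (hx t ht)).congr_deriv ?_
  have hcross : v (x t) ⨯₃ rot v (x t) = -((R (x t) ⬝ᵥ v (x t)) • a (x t)) := by
    rw [hrot', map_add, map_smul, cross_self, smul_zero, zero_add, cross_cross_eq_smul_sub_smul',
      ← dot_eq_dotProduct, horth, zero_smul, zero_sub]
  rw [fderiv_apply_self_eq_grad_sub_cross_rot hvx, hcross, sub_neg_eq_add]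
  rfl

/-- Kummer systems (equation (88)): if `⟨v, a⟩ = 0` and `rot v = ν v + R × a`, then
solutions of `ẋ = v(x)` satisfy `ẍ = ∇(½‖v‖²)(x) + ⟨R(x), v(x)⟩ a(x)`. -/
theorem kummer_second_order
    (a v R : (Fin 3 → ℝ) → (Fin 3 → ℝ)) (ν : (Fin 3 → ℝ) → ℝ)
    (ha : ContDiff ℝ 1 a) (hv : ContDiff ℝ 1 v) (hR : ContDiff ℝ 1 R)
    (horth : ∀ x, dot (v x) (a x) = 0)
    (hrot : ∀ x, rot v x = fun k => ν x * v x k + cross (R x) (a x) k)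
    (t₁ t₂ : ℝ) (x : ℝ → (Fin 3 → ℝ))
    (hx : ∀ t ∈ Ioo t₁ t₂, HasDerivAt x (v (x t)) t) :
    ∀ t ∈ Ioo t₁ t₂,
      HasDerivAt (fun s => v (x s))
        (fun k => grad (fun y => (1 / 2) * nsq (v y)) (x t) k
          + dot (R (x t)) (v (x t)) * a (x t) k) t :=
  kummer_second_order_general a v R ν hv horth hrot t₁ t₂ x hx
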